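/- For any d > 1/2, the proportion U(m,d)/2^m tends to 1 as m → ∞, where U(m,d) = |{y ∈ ℕ : 0 ≤ y < 2^m and S_m(y) ≤ m·d}|. -/

import Mathlib

/-!
The first `m` parities of the orbit of `y` determine `y` modulo `2 ^ m`, so
`y ↦ {k < m | T^[k] y odd}` is injective on `[0, 2 ^ m)`. Hence the second moment of
`2 * (number of odd steps before m) - m` over `y < 2 ^ m` is at most its sum over all subsets of
`range m`, which is the binomial variance `m * 2 ^ m`. Chebyshev's inequality then bounds the
proportion of `y < 2 ^ m` with `S m y > m * d` by `4 / ((2 * d - 1) ^ 2 * m)`.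
-/

open Filter

/-- The (accelerated) Collatz map. -/
def T (n : ℕ) : ℕ := if n % 2 = 0 then n / 2 else (3 * n + 1) / 2

/-- Parity of the k-th iterate. -/
def X (k y : ℕ) : ℕ := T^[k] y % 2

/-- S_m(y) = X_0(y) + ... + X_m(y). -/
def S (m y : ℕ) : ℕ := ∑ k ∈ Finset.range (m + 1), X k y

/-- Upper natural density. -/
noncomputable def ud (A : Set ℕ) : ℝ :=
  Filter.limsup (fun n => ((A ∩ Set.Iic n).ncard : ℝ) / n) Filter.atTop

/-- Positive upper density preserving. -/
def PDP (H : Set ℕ → Set ℕ) : Prop := ∀ A : Set ℕ, 0 < ud A → 0 < ud (H A)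

/-- H_f for real-valued f. -/
def Hf (f : ℕ → ℝ) (A : Set ℕ) : Set ℕ :=
  {m | ∃ n ∈ A, ∃ k : ℕ, T^[k] n = m ∧ (m : ℝ) < f n}

/-- H_f for ℕ-valued f. -/
def HfN (f : ℕ → ℕ) (A : Set ℕ) : Set ℕ :=
  {m | ∃ n ∈ A, ∃ k : ℕ, T^[k] n = m ∧ m < f n}

/-- S has natural density one. -/
def DensityOne (A : Set ℕ) : Prop :=
  Filter.Tendsto (fun n => ((A ∩ Set.Iic n).ncard : ℝ) / n) Filter.atTop (nhds 1)

/-- U(m,d) = number of residues y < 2^m with S_m(y) ≤ m d. -/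
noncomputable def U (m : ℕ) (d : ℝ) : ℕ :=
  {y : ℕ | y < 2 ^ m ∧ (S m y : ℝ) ≤ m * d}.ncard

open Finset

lemma X_lt_two (k y : ℕ) : X k y < 2 := Nat.mod_lt _ two_pos

lemma X_succ (k y : ℕ) : X (k + 1) y = X k (T y) := by
  rw [X, X, Function.iterate_succ_apply]

lemma two_mul_T (n : ℕ) : 2 * T n = if n % 2 = 0 then n else 3 * n + 1 := by
  unfold T; split_ifs <;> omega

lemma modEq_pow_two_of_X_eq {m y y' : ℕ} (h : ∀ k < m, X k y = X k y') :
    y ≡ y' [MOD 2 ^ m] := by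
  induction m generalizing y y' with
  | zero => exact Nat.modEq_one
  | succ m ih =>
    have hpar : y % 2 = y' % 2 := h 0 m.succ_pos
    have hT : 2 * T y ≡ 2 * T y' [MOD 2 ^ (m + 1)] := by
      rw [pow_succ']
      exact (ih fun k hk => by simpa only [X_succ] using h (k + 1) (by omega)).mul_left' 2
    rw [two_mul_T, two_mul_T, hpar] at hT
    split_ifs at hT
    · exact hT
    · have hcop : Nat.Coprime (2 ^ (m + 1)) 3 := Nat.Coprime.pow_left _ (by decide)
      exact (Nat.ModEq.add_right_cancel' 1 hT).cancel_left_of_coprime hcop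

lemma sum_powerset_sq_two_mul_card_sub_card {α : Type*} [DecidableEq α] (t : Finset α) :
    ∑ s ∈ t.powerset, (2 * (#s : ℝ) - #t) ^ 2 = (#t : ℝ) * 2 ^ #t := by
  induction t using Finset.induction_on with
  | empty => simp
  | insert a t ha ih =>
    have hcard : ∀ s ∈ t.powerset, #(insert a s) = #s + 1 := fun s hs =>
      card_insert_of_notMem fun has => ha (mem_powerset.mp hs has)
    calc ∑ s ∈ (insert a t).powerset, (2 * (#s : ℝ) - #(insert a t)) ^ 2
        = ∑ s ∈ t.powerset, ((2 * (#s : ℝ) - (#t + 1)) ^ 2 + (2 * (#s + 1 : ℝ) - (#t + 1)) ^ 2) := by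
          rw [sum_powerset_insert ha, ← sum_add_distrib, card_insert_of_notMem ha]
          refine sum_congr rfl fun s hs => ?_
          rw [hcard s hs]
          push_cast; ring
      _ = ∑ s ∈ t.powerset, (2 * (2 * (#s : ℝ) - #t) ^ 2 + 2) := by
          refine sum_congr rfl fun s _ => ?_
          ring
      _ = (#(insert a t) : ℝ) * 2 ^ #(insert a t) := by
          rw [sum_add_distrib, ← mul_sum, ih, sum_const, card_powerset, card_insert_of_notMem ha]
          push_cast; ring

def oddTimes (m y : ℕ) : Finset ℕ := {k ∈ range m | X k y = 1}

lemma card_oddTimes (m y : ℕ) : #(oddTimes m y) = ∑ k ∈ range m, X k y := by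
  rw [oddTimes, card_filter]
  refine sum_congr rfl fun k _ => ?_
  have := X_lt_two k y
  split_ifs <;> omega

lemma injOn_oddTimes (m : ℕ) : Set.InjOn (oddTimes m) (range (2 ^ m)) := by
  intro y hy y' hy' h
  have hX : ∀ k < m, X k y = X k y' := by
    intro k hk
    have hmem : X k y = 1 ↔ X k y' = 1 := by
      simpa [oddTimes, hk] using congrArg (k ∈ ·) h
    have := X_lt_two k y
    have := X_lt_two k y'
    omega
  exact Nat.ModEq.eq_of_lt_of_lt (modEq_pow_two_of_X_eq hX) (mem_range.mp hy) (mem_range.mp hy')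

lemma sum_sq_two_mul_sum_X_sub_le (m : ℕ) :
    ∑ y ∈ range (2 ^ m), (2 * (∑ k ∈ range m, X k y : ℕ) - m : ℝ) ^ 2 ≤ m * 2 ^ m := by
  calc ∑ y ∈ range (2 ^ m), (2 * (∑ k ∈ range m, X k y : ℕ) - m : ℝ) ^ 2
      = ∑ s ∈ (range (2 ^ m)).image (oddTimes m), (2 * (#s : ℝ) - m) ^ 2 := by
        rw [sum_image (injOn_oddTimes m)]
        simp only [card_oddTimes]
    _ ≤ ∑ s ∈ (range m).powerset, (2 * (#s : ℝ) - #(range m)) ^ 2 := by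
        rw [card_range]
        refine sum_le_sum_of_subset_of_nonneg ?_ fun _ _ _ => sq_nonneg _
        intro s hs
        obtain ⟨y, -, rfl⟩ := mem_image.mp hs
        exact mem_powerset.mpr (filter_subset _ _)
    _ = m * 2 ^ m := by rw [sum_powerset_sq_two_mul_card_sub_card, card_range]

lemma card_lt_S_mul_sq_le {m : ℕ} {d c : ℝ} (hc : 0 ≤ c) (hcd : c ≤ 2 * m * d - m - 2) :
    (#{y ∈ range (2 ^ m) | m * d < S m y} : ℝ) * c ^ 2 ≤ m * 2 ^ m := by
  calc (#{y ∈ range (2 ^ m) | m * d < S m y} : ℝ) * c ^ 2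
      ≤ ∑ y ∈ range (2 ^ m) with m * d < S m y, (2 * (∑ k ∈ range m, X k y : ℕ) - m : ℝ) ^ 2 := by
        rw [← nsmul_eq_mul]
        refine card_nsmul_le_sum _ _ _ fun y hy => pow_le_pow_left₀ hc ?_ 2
        have hlt : m * d < S m y := (mem_filter.mp hy).2
        have hS : (S m y : ℝ) ≤ (∑ k ∈ range m, X k y : ℕ) + 1 := by
          rw [S, sum_range_succ]
          exact_mod_cast Nat.add_le_add_left (Nat.le_of_lt_succ (X_lt_two m y)) _
        linarith
    _ ≤ ∑ y ∈ range (2 ^ m), (2 * (∑ k ∈ range m, X k y : ℕ) - m : ℝ) ^ 2 :=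
        sum_le_sum_of_subset_of_nonneg (filter_subset _ _) fun _ _ _ => sq_nonneg _
    _ ≤ m * 2 ^ m := sum_sq_two_mul_sum_X_sub_le m

lemma card_lt_S_div_le {m : ℕ} {d : ℝ} (hm : 4 ≤ m * (2 * d - 1)) :
    (#{y ∈ range (2 ^ m) | m * d < S m y} : ℝ) / 2 ^ m ≤ 4 / ((2 * d - 1) ^ 2 * m) := by
  have hm0 : (0 : ℝ) < m := by
    rcases Nat.eq_zero_or_pos m with rfl | h
    · norm_num at hm
    · exact_mod_cast h
  have hε : 0 < 2 * d - 1 := pos_of_mul_pos_right (by linarith) hm0.le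
  have hbound := card_lt_S_mul_sq_le (m := m) (d := d) (c := m * (2 * d - 1) / 2)
    (by positivity) (by linarith)
  set B : ℝ := ↑(#{y ∈ range (2 ^ m) | m * d < S m y})
  rw [div_le_div_iff₀ (by positivity) (by positivity)]
  refine le_of_mul_le_mul_left ?_ (by positivity : (0 : ℝ) < m / 4)
  calc (m / 4 * (B * ((2 * d - 1) ^ 2 * m)) : ℝ) = B * (m * (2 * d - 1) / 2) ^ 2 := by ring
    _ ≤ m * 2 ^ m := hbound
    _ = m / 4 * (4 * 2 ^ m) := by ring

lemma U_div_pow_eq (m : ℕ) (d : ℝ) :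
    (U m d : ℝ) / 2 ^ m = 1 - (#{y ∈ range (2 ^ m) | m * d < S m y} : ℝ) / 2 ^ m := by
  have hU : U m d = #{y ∈ range (2 ^ m) | (S m y : ℝ) ≤ m * d} := by
    rw [U, ← Set.ncard_coe_finset]
    congr
    ext y
    simp
  have hsplit := card_filter_add_card_filter_not (s := range (2 ^ m)) (fun y => (S m y : ℝ) ≤ m * d)
  simp only [not_le, card_range] at hsplit
  rw [eq_sub_iff_add_eq, ← add_div, hU, ← Nat.cast_add, hsplit]
  push_cast
  exact div_self (by positivity)

theorem stmt18 (d : ℝ) (hd : 1 / 2 < d) :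
    Filter.Tendsto (fun m : ℕ => (U m d : ℝ) / 2 ^ m) Filter.atTop (nhds 1) := by
  have hε : 0 < 2 * d - 1 := by linarith
  have hbad : Tendsto (fun m : ℕ => (#{y ∈ range (2 ^ m) | m * d < S m y} : ℝ) / 2 ^ m)
      atTop (nhds 0) := by
    refine squeeze_zero' (Eventually.of_forall fun m => by positivity) ?_
      (tendsto_const_div_atTop_nhds_zero_nat (4 / (2 * d - 1) ^ 2))
    filter_upwards [tendsto_natCast_atTop_atTop.eventually_ge_atTop (4 / (2 * d - 1))] with m hm
    rw [div_div]
    exact card_lt_S_div_le ((div_le_iff₀ hε).mp hm)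
  simpa only [U_div_pow_eq, sub_zero] using hbad.const_sub 1
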